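/- arXiv:2011.13103 — 3 statements merged into one kernel-verified Lean document; each statement's English description precedes it below -/
import Mathlib

section
/- The semi-tensor product is associative: for any real matrices A, B, C, (A⋉B)⋉C = A⋉(B⋉C). -/
open Matrix Kronecker

noncomputable section

/-- Row-major pairing `(i, j) ↦ N * i + j`, matching the standard Kronecker convention. -/
def kronEquiv (M N : ℕ) : Fin M × Fin N ≃ Fin (M * N) := finProdFinEquiv

/-- Kronecker product of two (column) vectors. -/
def vecKron {M N : ℕ} (u : Fin M → ℝ) (x : Fin N → ℝ) : Fin (M * N) → ℝ :=
  fun k => u ((kronEquiv M N).symm k).1 * x ((kronEquiv M N).symm k).2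

/-- `δ_N^i` (0-indexed): the `i`-th column of the identity matrix `I_N`. -/
def eVec (N : ℕ) (i : Fin N) : Fin N → ℝ := fun j => if j = i then 1 else 0

/-- The set `Δ_N` of columns of the identity matrix. -/
def deltaSet (N : ℕ) : Set (Fin N → ℝ) := {x | ∃ i, x = eVec N i}

/-- A matrix is logical if every column is a standard basis vector. -/
def IsLogical {m n : ℕ} (L : Matrix (Fin m) (Fin n) ℝ) : Prop :=
  ∀ j, ∃ i, (fun k => L k j) = eVec m i

/-- The power-reducing matrix `PR_k = diag(δ_k^1, …, δ_k^k)`: column `j` is `δ_k^j ⊗ δ_k^j`. -/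
def PRmat (k : ℕ) : Matrix (Fin (k * k)) (Fin k) ℝ :=
  Matrix.of fun i j => vecKron (eVec k j) (eVec k j) i

lemma stp_dim (n p : ℕ) : p * (Nat.lcm n p / p) = n * (Nat.lcm n p / n) := by
  rw [Nat.mul_div_cancel' (Nat.dvd_lcm_right n p), Nat.mul_div_cancel' (Nat.dvd_lcm_left n p)]

/-- The semi-tensor product `A ⋉ B = (A ⊗ I_{t/n})(B ⊗ I_{t/p})`, `t = lcm(n,p)`. -/
def stp {m n p q : ℕ} (A : Matrix (Fin m) (Fin n) ℝ) (B : Matrix (Fin p) (Fin q) ℝ) :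
    Matrix (Fin (m * (Nat.lcm n p / n))) (Fin (q * (Nat.lcm n p / p))) ℝ :=
  (Matrix.reindex (kronEquiv m _) (kronEquiv n _)
      (A ⊗ₖ (1 : Matrix (Fin (Nat.lcm n p / n)) (Fin (Nat.lcm n p / n)) ℝ))) *
  (Matrix.reindex ((kronEquiv p _).trans (finCongr (stp_dim n p))) (kronEquiv q _)
      (B ⊗ₖ (1 : Matrix (Fin (Nat.lcm n p / p)) (Fin (Nat.lcm n p / p)) ℝ)))

/-! Write `M ⊗ I_t` for the Kronecker product with an identity matrix. Since
`(M N) ⊗ I_t = (M ⊗ I_t)(N ⊗ I_t)` and `(M ⊗ I_t) ⊗ I_u = M ⊗ I_{tu}`, both `(A ⋉ B) ⋉ C` and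
`A ⋉ (B ⋉ C)` are products `(A ⊗ I_X)(B ⊗ I_Y)(C ⊗ I_Z)` with `nX = pY` and `qY = rZ`. The factors
`X, Y, Z` agree on the two sides because
`p · lcm (q · lcm(n,p)/p) r = q · lcm n (p · lcm(q,r)/q)`, both being `lcm (nq, pq, pr)`. -/

namespace Matrix

theorem reindex_finCongr_heq {R : Type*} {a a' b b' : ℕ} (ha : a = a') (hb : b = b')
    (M : Matrix (Fin a) (Fin b) R) : reindex (finCongr ha) (finCongr hb) M ≍ M := by
  subst ha hb; rfl

theorem mul_heq_mul {R : Type*} [Mul R] [AddCommMonoid R] {a b c a' b' c' : ℕ}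
    (ha : a = a') (hb : b = b') (hc : c = c')
    {M : Matrix (Fin a) (Fin b) R} {N : Matrix (Fin b) (Fin c) R}
    {M' : Matrix (Fin a') (Fin b') R} {N' : Matrix (Fin b') (Fin c') R}
    (hM : M ≍ M') (hN : N ≍ N') : M * N ≍ M' * N' := by
  subst ha hb hc hM hN; rfl

section KronId

variable {R : Type*} [CommSemiring R]

def kronId {m n : ℕ} (A : Matrix (Fin m) (Fin n) R) (t : ℕ) :
    Matrix (Fin (m * t)) (Fin (n * t)) R :=
  reindex (kronEquiv m t) (kronEquiv n t) (A ⊗ₖ (1 : Matrix (Fin t) (Fin t) R))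

theorem kronId_apply {m n t : ℕ} (A : Matrix (Fin m) (Fin n) R) (i : Fin m) (j : Fin n)
    (a b : Fin t) :
    kronId A t (kronEquiv m t (i, a)) (kronEquiv n t (j, b)) =
      A i j * (1 : Matrix (Fin t) (Fin t) R) a b := by
  simp [kronId]

theorem kronId_mul {m n k : ℕ} (A : Matrix (Fin m) (Fin n) R) (B : Matrix (Fin n) (Fin k) R)
    (t : ℕ) : kronId (A * B) t = kronId A t * kronId B t := by
  simp only [kronId, ← mul_kronecker_mul, Matrix.mul_one, reindex_apply, submatrix_mul_equiv]

theorem kronId_heq_kronId {a b a' b' t t' : ℕ} (ha : a = a') (hb : b = b') (ht : t = t')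
    {M : Matrix (Fin a) (Fin b) R} {M' : Matrix (Fin a') (Fin b') R} (hM : M ≍ M') :
    kronId M t ≍ kronId M' t' := by
  subst ha hb ht hM; rfl

theorem finCongr_kronEquiv_kronEquiv {m t u : ℕ} (i : Fin m) (a : Fin t) (c : Fin u) :
    finCongr (mul_assoc m t u) (kronEquiv (m * t) u (kronEquiv m t (i, a), c)) =
      kronEquiv m (t * u) (i, kronEquiv t u (a, c)) := by
  ext
  simp only [kronEquiv, finCongr_apply, Fin.val_cast, finProdFinEquiv_apply_val]
  ring

theorem one_apply_kronEquiv {t u : ℕ} (a b : Fin t) (c d : Fin u) :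
    (1 : Matrix (Fin (t * u)) (Fin (t * u)) R) (kronEquiv t u (a, c)) (kronEquiv t u (b, d)) =
      (1 : Matrix (Fin t) (Fin t) R) a b * (1 : Matrix (Fin u) (Fin u) R) c d := by
  rw [← submatrix_apply (1 : Matrix (Fin (t * u)) (Fin (t * u)) R) (kronEquiv t u),
    submatrix_one_equiv, ← one_kronecker_one, kronecker_apply]

theorem kronId_kronId {m n : ℕ} (A : Matrix (Fin m) (Fin n) R) (t u : ℕ) :
    kronId (kronId A t) u = reindex (finCongr (mul_assoc m t u).symm)
      (finCongr (mul_assoc n t u).symm) (kronId A (t * u)) := by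
  ext I J
  obtain ⟨⟨⟨i, a⟩, c⟩, rfl⟩ :=
    ((kronEquiv m t).prodCongr (Equiv.refl _)).trans (kronEquiv (m * t) u) |>.surjective I
  obtain ⟨⟨⟨j, b⟩, d⟩, rfl⟩ :=
    ((kronEquiv n t).prodCongr (Equiv.refl _)).trans (kronEquiv (n * t) u) |>.surjective J
  simp only [Equiv.trans_apply, Equiv.prodCongr_apply, Prod.map, Equiv.refl_apply, kronId_apply,
    reindex_apply, submatrix_apply, finCongr_symm, finCongr_kronEquiv_kronEquiv,
    one_apply_kronEquiv, mul_assoc]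

theorem kronId_kronId_heq {m n : ℕ} (A : Matrix (Fin m) (Fin n) R) (t u : ℕ) :
    kronId (kronId A t) u ≍ kronId A (t * u) := by
  rw [kronId_kronId]
  exact reindex_finCongr_heq _ _ _

def kronIdMul {m n p q : ℕ} (A : Matrix (Fin m) (Fin n) R) (B : Matrix (Fin p) (Fin q) R)
    (α β : ℕ) (h : p * β = n * α) : Matrix (Fin (m * α)) (Fin (q * β)) R :=
  kronId A α * reindex (finCongr h) (Equiv.refl _) (kronId B β)

theorem kronId_kronIdMul_heq {m n p q : ℕ} (A : Matrix (Fin m) (Fin n) R)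
    (B : Matrix (Fin p) (Fin q) R) {α β : ℕ} (h : p * β = n * α) (γ : ℕ) :
    kronId (kronIdMul A B α β h) γ ≍
      kronIdMul A B (α * γ) (β * γ) (by rw [← mul_assoc, h, mul_assoc]) := by
  rw [kronIdMul, kronId_mul]
  refine mul_heq_mul (mul_assoc ..) (mul_assoc ..) (mul_assoc ..) (kronId_kronId_heq A α γ) ?_
  refine .trans ?_ (reindex_finCongr_heq _ rfl _).symm
  exact (kronId_heq_kronId h.symm rfl rfl (reindex_finCongr_heq h rfl _)).trans
    (kronId_kronId_heq B β γ)

section Triple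

variable {m n p q r s : ℕ} (A : Matrix (Fin m) (Fin n) R) (B : Matrix (Fin p) (Fin q) R)
  (C : Matrix (Fin r) (Fin s) R)

def kronIdMul₃ (X Y Z : ℕ) (hAB : p * Y = n * X) (hBC : r * Z = q * Y) :
    Matrix (Fin (m * X)) (Fin (s * Z)) R :=
  kronIdMul A B X Y hAB * reindex (finCongr hBC) (Equiv.refl _) (kronId C Z)

theorem kronIdMul₃_congr {X Y Z X' Y' Z' : ℕ} (hX : X = X') (hY : Y = Y') (hZ : Z = Z')
    (hAB : p * Y = n * X) (hBC : r * Z = q * Y) (hAB' : p * Y' = n * X')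
    (hBC' : r * Z' = q * Y') :
    kronIdMul₃ A B C X Y Z hAB hBC ≍ kronIdMul₃ A B C X' Y' Z' hAB' hBC' := by
  subst hX hY hZ; rfl

theorem kronIdMul_kronIdMul_left_heq {α β γ δ : ℕ} (h : p * β = n * α)
    (h' : r * δ = q * β * γ) :
    kronIdMul (kronIdMul A B α β h) C γ δ h' ≍
      kronIdMul₃ A B C (α * γ) (β * γ) δ (by rw [← mul_assoc, h, mul_assoc])
        (h'.trans (mul_assoc ..)) :=
  mul_heq_mul (mul_assoc ..) (mul_assoc ..) rfl (kronId_kronIdMul_heq A B h γ)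
    ((reindex_finCongr_heq h' rfl _).trans (reindex_finCongr_heq _ rfl _).symm)

theorem kronIdMul_kronIdMul_right_heq {α β γ δ : ℕ} (h : r * γ = q * β)
    (h' : p * β * δ = n * α) :
    kronIdMul A (kronIdMul B C β γ h) α δ h' ≍
      kronIdMul₃ A B C α (β * δ) (γ * δ) ((mul_assoc ..).symm.trans h')
        (by rw [← mul_assoc, h, mul_assoc]) := by
  conv_rhs => rw [kronIdMul₃, kronIdMul, Matrix.mul_assoc]
  rw [kronIdMul]
  refine mul_heq_mul rfl rfl (mul_assoc ..) HEq.rfl ?_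
  refine (reindex_finCongr_heq h' rfl _).trans ((kronId_kronIdMul_heq B C h δ).trans ?_)
  rw [kronIdMul]
  exact mul_heq_mul ((mul_assoc ..).symm.trans h') rfl rfl (reindex_finCongr_heq _ rfl _).symm
    HEq.rfl

end Triple

end KronId

end Matrix

theorem stp_eq_kronIdMul {m n p q : ℕ} (A : Matrix (Fin m) (Fin n) ℝ)
    (B : Matrix (Fin p) (Fin q) ℝ) :
    stp A B = kronIdMul A B (Nat.lcm n p / n) (Nat.lcm n p / p) (stp_dim n p) :=
  rfl

theorem Nat.mul_lcm_mul_lcm_div_eq (n p q r : ℕ) :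
    p * Nat.lcm (q * (Nat.lcm n p / p)) r = q * Nat.lcm n (p * (Nat.lcm q r / q)) := by
  rw [← Nat.lcm_mul_left, ← Nat.lcm_mul_left, mul_left_comm,
    Nat.mul_div_cancel' (Nat.dvd_lcm_right n p), mul_left_comm,
    Nat.mul_div_cancel' (Nat.dvd_lcm_left q r), ← Nat.lcm_mul_left, ← Nat.lcm_mul_left,
    Nat.lcm_assoc, mul_comm q p]

theorem stp_assoc_blowups_eq (n p q r : ℕ) :
    Nat.lcm n p / n * (Nat.lcm (q * (Nat.lcm n p / p)) r / (q * (Nat.lcm n p / p))) =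
      Nat.lcm n (p * (Nat.lcm q r / q)) / n ∧
    Nat.lcm n p / p * (Nat.lcm (q * (Nat.lcm n p / p)) r / (q * (Nat.lcm n p / p))) =
      Nat.lcm q r / q * (Nat.lcm n (p * (Nat.lcm q r / q)) / (p * (Nat.lcm q r / q))) ∧
    Nat.lcm (q * (Nat.lcm n p / p)) r / r =
      Nat.lcm q r / r * (Nat.lcm n (p * (Nat.lcm q r / q)) / (p * (Nat.lcm q r / q))) := by
  -- if a dimension vanishes, every factor is `0`, using `Nat.lcm a 0 = 0` and `a / 0 = 0`
  by_cases h0 : n = 0 ∨ p = 0 ∨ q = 0 ∨ r = 0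
  · rcases h0 with rfl | rfl | rfl | rfl <;> simp
  push Not at h0
  obtain ⟨hn, hp, hq, hr⟩ := h0
  have key := Nat.mul_lcm_mul_lcm_div_eq n p q r
  have hα := Nat.mul_div_cancel' (Nat.dvd_lcm_left n p)
  have hβ := Nat.mul_div_cancel' (Nat.dvd_lcm_right n p)
  have hγ := Nat.mul_div_cancel' (Nat.dvd_lcm_left (q * (Nat.lcm n p / p)) r)
  have hδ := Nat.mul_div_cancel' (Nat.dvd_lcm_right (q * (Nat.lcm n p / p)) r)
  have hβ' := Nat.mul_div_cancel' (Nat.dvd_lcm_left q r)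
  have hγ' := Nat.mul_div_cancel' (Nat.dvd_lcm_right q r)
  have hα' := Nat.mul_div_cancel' (Nat.dvd_lcm_left n (p * (Nat.lcm q r / q)))
  have hδ' := Nat.mul_div_cancel' (Nat.dvd_lcm_right n (p * (Nat.lcm q r / q)))
  -- multiplied by `n q`, `p q` and `p r` respectively, each equation becomes `key`
  refine ⟨?_, ?_, ?_⟩
  · apply Nat.eq_of_mul_eq_mul_left (Nat.pos_of_ne_zero (mul_ne_zero hn hq))
    grind
  · apply Nat.eq_of_mul_eq_mul_left (Nat.pos_of_ne_zero (mul_ne_zero hp hq))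
    grind
  · apply Nat.eq_of_mul_eq_mul_left (Nat.pos_of_ne_zero (mul_ne_zero hp hr))
    grind

/-- the semi-tensor product is associative. -/
theorem stp_assoc {m n p q r s : ℕ} (A : Matrix (Fin m) (Fin n) ℝ)
    (B : Matrix (Fin p) (Fin q) ℝ) (C : Matrix (Fin r) (Fin s) ℝ) :
    HEq (stp (stp A B) C) (stp A (stp B C)) := by
  obtain ⟨hX, hY, hZ⟩ := stp_assoc_blowups_eq n p q r
  simp only [stp_eq_kronIdMul]
  exact (kronIdMul_kronIdMul_left_heq A B C _ _).trans <|
    (kronIdMul₃_congr A B C hX hY hZ _ _ _ _).trans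
      (kronIdMul_kronIdMul_right_heq A B C _ _).symm
end
end

section
/- For every Boolean function F : {0,1}^n → {0,1} there exists a unique logical matrix M_F ∈ L_{2×2^n} such that, for all x_1,...,x_n ∈ Δ_2, the vector form of F satisfies f(x_1,...,x_n) = M_F ⋉ x_1 ⋉ ⋯ ⋉ x_n, where the vector form of X ∈ {0,1} is (X, 1−X)^T ∈ Δ_2. -/
/-!
For `x_i ∈ Δ_2` the product `x_1 ⋉ ⋯ ⋉ x_n` is a basis vector `δ_{2^n}^k`, and `k` runs
bijectively over `Fin (2^n)` as `(x_1, …, x_n)` runs over `Δ_2^n`. Since `M ⋉ δ_{2^n}^k` is the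
`k`-th column of `M`, the identity `f(x) = M_F ⋉ x` prescribes every column of `M_F`, each of
them an element of `Δ_2`.
-/

open Matrix Kronecker

noncomputable section

/-- Vector form of a Boolean value: `vec(1) = δ_2^1`, `vec(0) = δ_2^2`. -/
def vecB (b : Bool) : Fin 2 → ℝ := eVec 2 (if b then 0 else 1)

/-- Iterated Kronecker product `x_1 ⊗ x_2 ⊗ ⋯ ⊗ x_n` of vectors in `Δ_2`
(which coincides with the iterated semi-tensor product). -/
def iterKron : (n : ℕ) → (Fin n → Fin 2 → ℝ) → Fin (2 ^ n) → ℝ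
  | 0, _ => fun _ => 1
  | n + 1, x => fun k =>
      vecKron (x 0) (iterKron n fun i => x i.succ)
        (finCongr (by rw [pow_succ'] : 2 ^ (n + 1) = 2 * 2 ^ n) k)

lemma eVec_eq_single (N : ℕ) (i : Fin N) : eVec N i = Pi.single i 1 := by
  funext j
  simp [eVec, Pi.single_apply]

lemma mulVec_eVec {m N : ℕ} (M : Matrix (Fin m) (Fin N) ℝ) (k : Fin N) :
    M *ᵥ eVec N k = M.col k := by
  rw [eVec_eq_single, mulVec_single_one]

lemma eVec_finCongr {M N : ℕ} (h : M = N) (i : Fin N) (k : Fin M) :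
    eVec N i (finCongr h k) = eVec M ((finCongr h).symm i) k := by
  simp only [eVec, Equiv.eq_symm_apply]

lemma vecKron_eVec {M N : ℕ} (a : Fin M) (b : Fin N) :
    vecKron (eVec M a) (eVec N b) = eVec (M * N) (kronEquiv M N (a, b)) := by
  funext k
  obtain ⟨⟨i, j⟩, rfl⟩ := (kronEquiv M N).surjective k
  simp only [vecKron, eVec, Equiv.symm_apply_apply, Equiv.apply_eq_iff_eq, Prod.ext_iff,
    ite_zero_mul_ite_zero, mul_one]

/-- `true ↦ 0`, `false ↦ 1`, the index convention of `vecB`. -/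
def boolFinEquiv : Bool ≃ Fin 2 := Equiv.boolNot.trans finTwoEquiv.symm

lemma vecB_eq_eVec (b : Bool) : vecB b = eVec 2 (boolFinEquiv b) := by
  cases b <;> rfl

/-- Big-endian binary indexing, the order in which `iterKron` lists its entries. -/
def boolTupleFinEquiv : (n : ℕ) → (Fin n → Bool) ≃ Fin (2 ^ n)
  | 0 => (Equiv.ofUnique _ (Fin 1)).trans (finCongr (pow_zero 2).symm)
  | n + 1 => (Fin.consEquiv fun _ => Bool).symm.trans <|
      (boolFinEquiv.prodCongr (boolTupleFinEquiv n)).trans <|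
      (kronEquiv 2 (2 ^ n)).trans (finCongr (pow_succ' 2 n).symm)

lemma iterKron_vecB : ∀ (n : ℕ) (X : Fin n → Bool),
    iterKron n (fun i => vecB (X i)) = eVec (2 ^ n) (boolTupleFinEquiv n X)
  | 0, X => by
    have : Subsingleton (Fin (2 ^ 0)) := Fin.subsingleton_iff_le_one.2 le_rfl
    funext k
    simp [iterKron, eVec, Subsingleton.elim k (boolTupleFinEquiv 0 X)]
  | n + 1, X => by
    funext k
    change vecKron (vecB (X 0)) (iterKron n fun i => vecB (X i.succ)) _ = _
    rw [iterKron_vecB n, vecB_eq_eVec, vecKron_eVec, eVec_finCongr]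
    rfl

/-- every Boolean function has a unique structure matrix
`M_F ∈ L_{2×2^n}` with `f(x_1,…,x_n) = M_F ⋉ x_1 ⋉ ⋯ ⋉ x_n`. -/
theorem structure_matrix_exists_unique (n : ℕ) (F : (Fin n → Bool) → Bool) :
    ∃! MF : Matrix (Fin 2) (Fin (2 ^ n)) ℝ, IsLogical MF ∧
      ∀ X : Fin n → Bool, vecB (F X) = MF.mulVec (iterKron n fun i => vecB (X i)) := by
  let e := boolTupleFinEquiv n
  refine ⟨Matrix.of fun i k => vecB (F (e.symm k)) i, ⟨fun k => ?_, fun X => ?_⟩, ?_⟩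
  · exact ⟨boolFinEquiv (F (e.symm k)), vecB_eq_eVec _⟩
  · rw [iterKron_vecB, mulVec_eVec]
    ext i
    simp [e]
  · rintro M ⟨-, hM⟩
    ext i k
    simpa [e, iterKron_vecB, mulVec_eVec] using congrFun (hM (e.symm k)) i |>.symm
end
end

section
/- With the setup of the truth matrix T for the equation M_F u x = c, a logical matrix M_G ∈ L_{2^m×2^n} defines a consequence solution (i.e., for every pair (u,x) ∈ Δ_{2^m}×Δ_{2^n} with M_F u x = c one has u = M_G x) if and only if T ≤ M_G entrywise. -/
open Matrix Kronecker

noncomputable section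

lemma forall_mem_deltaSet {N : ℕ} {P : (Fin N → ℝ) → Prop} :
    (∀ u ∈ deltaSet N, P u) ↔ ∀ i, P (eVec N i) := by
  simp [deltaSet]

lemma eVec_injective (N : ℕ) : Function.Injective (eVec N) := by
  intro i i' h
  simpa [eVec] using congrFun h i

lemma mulVec_eVec_s8 {M N : ℕ} (A : Matrix (Fin M) (Fin N) ℝ) (j : Fin N) :
    A.mulVec (eVec N j) = fun k => A k j := by
  funext k
  simp [Matrix.mulVec, dotProduct, eVec]

namespace IsLogical

variable {m n : ℕ} {L : Matrix (Fin m) (Fin n) ℝ}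

lemma mulVec_eVec_eq_iff (hL : IsLogical L) (i : Fin m) (j : Fin n) :
    L.mulVec (eVec n j) = eVec m i ↔ L i j = 1 := by
  obtain ⟨i₀, hi₀⟩ := hL j
  rw [mulVec_eVec_s8, hi₀, (eVec_injective m).eq_iff, congrFun hi₀ i]
  simp [eVec, eq_comm]

lemma ite_le_iff (hL : IsLogical L) (p : Prop) [Decidable p] (i : Fin m) (j : Fin n) :
    (if p then 1 else 0) ≤ L i j ↔ (p → L i j = 1) := by
  obtain ⟨i₀, hi₀⟩ := hL j
  rw [congrFun hi₀ i]
  by_cases hp : p <;> by_cases hi : i = i₀ <;> simp [eVec, hp, hi]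

end IsLogical

theorem consequence_iff_general (m n s : ℕ)
    (MF : Matrix (Fin (2 ^ s)) (Fin (2 ^ m * 2 ^ n)) ℝ)
    (c : Fin (2 ^ s) → ℝ)
    (T : Matrix (Fin (2 ^ m)) (Fin (2 ^ n)) ℝ)
    (hT : ∀ i j, T i j =
      if MF.mulVec (vecKron (eVec (2 ^ m) i) (eVec (2 ^ n) j)) = c then 1 else 0)
    (MG : Matrix (Fin (2 ^ m)) (Fin (2 ^ n)) ℝ) (hMG : IsLogical MG) :
    (∀ u ∈ deltaSet (2 ^ m), ∀ x ∈ deltaSet (2 ^ n),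
        MF.mulVec (vecKron u x) = c → u = MG.mulVec x) ↔
      ∀ i j, T i j ≤ MG i j := by
  simp only [forall_mem_deltaSet, eq_comm (a := eVec _ _), hMG.mulVec_eVec_eq_iff, hT,
    hMG.ite_le_iff]

/-- `u = M_G x` is a consequence solution of `M_F u x = c`
iff `T ≤ M_G` entrywise, where `T` is the truth matrix. -/
theorem consequence_iff (m n s : ℕ)
    (MF : Matrix (Fin (2 ^ s)) (Fin (2 ^ m * 2 ^ n)) ℝ) (hMF : IsLogical MF)
    (c : Fin (2 ^ s) → ℝ) (hc : c ∈ deltaSet (2 ^ s))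
    (T : Matrix (Fin (2 ^ m)) (Fin (2 ^ n)) ℝ)
    (hT : ∀ i j, T i j =
      if MF.mulVec (vecKron (eVec (2 ^ m) i) (eVec (2 ^ n) j)) = c then 1 else 0)
    (MG : Matrix (Fin (2 ^ m)) (Fin (2 ^ n)) ℝ) (hMG : IsLogical MG) :
    (∀ u ∈ deltaSet (2 ^ m), ∀ x ∈ deltaSet (2 ^ n),
        MF.mulVec (vecKron u x) = c → u = MG.mulVec x) ↔
      ∀ i j, T i j ≤ MG i j :=
  consequence_iff_general m n s MF c T hT MG hMG
end
end
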